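/- arXiv:2509.21500 — 7 statements merged into one kernel-verified Lean document; each statement's English description precedes it below -/
import Mathlib

section
/- Theorem 1(i): If f preserves the uniform distribution (Measure.map f U = U), then the KL divergence of the tilted measure from the uniform distribution is KL(π_{f,β} ‖ U) = ((1/β − 1)·e^{1/β} + 1)/(e^{1/β} − 1) − log β − log(e^{1/β} − 1). In particular, this KL divergence depends only on β and not on the choice of uniform-preserving f. -/
/-!
The density of `π_{f,β}` with respect to `U` is `ρ = exp (f / β) / Z`, so the KL divergence is
`∫ ρ log ρ dU = ∫ exp (f / β) / Z * (f / β - log Z) dU`. This integral and `Z` both integrate a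
function of `f u` against `U`, and `f` pushes `U` forward to `U`, so `f u` may be replaced by `u`:
they become elementary integrals of `exp (x / β)` and `x exp (x / β)` over `[0, 1]`, with
`Z = β (e^{1/β} - 1)`.
-/

open MeasureTheory Real

/-- The uniform distribution on `[0,1]`: Lebesgue measure restricted to `[0,1]`. -/
noncomputable def U : Measure ℝ := volume.restrict (Set.Icc 0 1)

/-- Normalizing constant `Z_{f,β} = ∫₀¹ exp(f(u)/β) du`. -/
noncomputable def Zf (f : ℝ → ℝ) (β : ℝ) : ℝ := ∫ u in Set.Icc (0:ℝ) 1, Real.exp (f u / β)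

/-- The RFT-aligned (tilted) reward distribution: density `exp(f(u)/β)/Z_{f,β}` w.r.t. `U`. -/
noncomputable def tilted (f : ℝ → ℝ) (β : ℝ) : Measure ℝ :=
  U.withDensity fun u => ENNReal.ofReal (Real.exp (f u / β) / Zf f β)

/-- Kullback–Leibler divergence `KL(μ ‖ μ₀) = ∫ log (dμ/dμ₀) dμ`. -/
noncomputable def KLdiv (μ μ₀ : Measure ℝ) : ℝ :=
  ∫ u, Real.log ((μ.rnDeriv μ₀) u).toReal ∂μ

lemma integral_log_rnDeriv_tilted_self {α : Type*} [MeasurableSpace α] {μ : Measure α}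
    [SigmaFinite μ] {g : α → ℝ} (hg : Integrable (fun x ↦ exp (g x)) μ) :
    ∫ x, log ((μ.tilted g).rnDeriv μ x).toReal ∂(μ.tilted g)
      = ∫ x, exp (g x) / (∫ y, exp (g y) ∂μ) * (g x - log (∫ y, exp (g y) ∂μ)) ∂μ := by
  rw [integral_tilted]
  refine integral_congr_ae ?_
  filter_upwards [log_rnDeriv_tilted_left_self hg] with x hx
  rw [hx, smul_eq_mul]

theorem integral_exp_div (a b : ℝ) {β : ℝ} (hβ : β ≠ 0) :
    ∫ x in a..b, exp (x / β) = β * (exp (b / β) - exp (a / β)) := by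
  rw [intervalIntegral.integral_comp_div exp hβ, integral_exp, smul_eq_mul]

theorem integral_sub_const_mul_exp_div (a b c : ℝ) {β : ℝ} (hβ : β ≠ 0) :
    ∫ x in a..b, (x - c) * exp (x / β)
      = β * ((b - β - c) * exp (b / β) - (a - β - c) * exp (a / β)) := by
  have hderiv : ∀ x ∈ Set.uIcc a b, HasDerivAt (fun x ↦ β * (x - β - c) * exp (x / β))
      ((x - c) * exp (x / β)) x := by
    intro x _
    have hlin : HasDerivAt (fun x ↦ β * (x - β - c)) β x := by
      simpa using (((hasDerivAt_id' x).sub_const β).sub_const c).const_mul β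
    refine (hlin.mul ((hasDerivAt_id' x).div_const β).exp).congr_deriv ?_
    field_simp
    ring
  rw [intervalIntegral.integral_eq_sub_of_hasDerivAt hderiv
    ((Continuous.intervalIntegrable (by fun_prop)) _ _)]
  ring

instance : IsProbabilityMeasure U := ⟨by simp [U]⟩

lemma integral_comp_of_map_eq_U {f : ℝ → ℝ} (hf : Measurable f) (hpres : Measure.map f U = U)
    {G : ℝ → ℝ} (hG : Continuous G) : ∫ u, G (f u) ∂U = ∫ x in (0:ℝ)..1, G x := by
  rw [← integral_map hf.aemeasurable hG.aestronglyMeasurable, hpres, U,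
    integral_Icc_eq_integral_Ioc, ← intervalIntegral.integral_of_le zero_le_one]

lemma integrable_comp_of_map_eq_U {f : ℝ → ℝ} (hf : Measurable f) (hpres : Measure.map f U = U)
    {G : ℝ → ℝ} (hG : Continuous G) : Integrable (fun u ↦ G (f u)) U := by
  refine (integrable_map_measure hG.aestronglyMeasurable hf.aemeasurable).mp ?_
  rw [hpres]
  exact hG.integrableOn_Icc

theorem kl_invariant_of_uniform_preserving_general
    (β : ℝ) (hβ : 0 < β) (f : ℝ → ℝ) (hf : Measurable f)
    (hpres : Measure.map f U = U) :
    KLdiv (tilted f β) U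
      = ((1 / β - 1) * Real.exp (1 / β) + 1) / (Real.exp (1 / β) - 1)
        - Real.log β - Real.log (Real.exp (1 / β) - 1) := by
  have hE : exp (1 / β) - 1 ≠ 0 := sub_ne_zero.mpr (one_lt_exp_iff.mpr (by positivity)).ne'
  have hZ : Zf f β = β * (exp (1 / β) - 1) := by
    rw [Zf, ← U, integral_comp_of_map_eq_U hf hpres (G := fun x ↦ exp (x / β)) (by fun_prop),
      integral_exp_div _ _ hβ.ne', zero_div, exp_zero]
  -- `tilted f β` unfolds to Mathlib's `U.tilted (f · / β)`, as `Zf f β` is `∫ u, exp (f u / β) ∂U`.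
  have hKL : KLdiv (tilted f β) U
      = ∫ u, exp (f u / β) / Zf f β * (f u / β - log (Zf f β)) ∂U :=
    integral_log_rnDeriv_tilted_self
      (integrable_comp_of_map_eq_U hf hpres (G := fun x ↦ exp (x / β)) (by fun_prop))
  have hintegrand : ∀ x, exp (x / β) / Zf f β * (x / β - log (Zf f β))
      = (x - β * log (Zf f β)) * exp (x / β) / (β * Zf f β) := fun x ↦ by
    field_simp
  rw [hKL, integral_comp_of_map_eq_U hf hpres
      (G := fun x ↦ exp (x / β) / Zf f β * (x / β - log (Zf f β))) (by fun_prop),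
    intervalIntegral.integral_congr fun x _ ↦ hintegrand x, intervalIntegral.integral_div,
    integral_sub_const_mul_exp_div _ _ _ hβ.ne', hZ, zero_div, exp_zero, log_mul hβ.ne' hE]
  field_simp
  ring

/-- Theorem 1(i): for any uniform-preserving misspecification map `f`, the KL divergence of
the tilted measure from `U` depends only on `β`. -/
theorem kl_invariant_of_uniform_preserving
    (β : ℝ) (hβ : 0 < β) (f : ℝ → ℝ) (hf : Measurable f)
    (hmaps : Set.MapsTo f (Set.Icc 0 1) (Set.Icc 0 1))
    (hpres : Measure.map f U = U) :
    KLdiv (tilted f β) U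
      = ((1 / β - 1) * Real.exp (1 / β) + 1) / (Real.exp (1 / β) - 1)
        - Real.log β - Real.log (Real.exp (1 / β) - 1) :=
  kl_invariant_of_uniform_preserving_general β hβ f hf hpres
end

section
/- Theorem 1(ii): If f preserves the uniform distribution and is moreover a bijection of [0,1] with measurable inverse f⁻¹, then the expected gold reward (equivalently, the win rate) of the tilted measure is ∫ u dπ_{f,β}(u) = (∫₀¹ f⁻¹(u) · e^{u/β} du) / (β · (e^{1/β} − 1)). -/
open MeasureTheory Real

/-! Since `f` preserves `U`, the substitution `v = f u` turns `Z_{f,β}` into `∫₀¹ e^{v/β} dv`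
and, using `f⁻¹ ∘ f = id` on `[0,1]`, turns `∫₀¹ u e^{f(u)/β} du` into `∫₀¹ f⁻¹(v) e^{v/β} dv`. -/

theorem integral_comp_eq_of_map_eq {α E : Type*} [MeasurableSpace α] [NormedAddCommGroup E]
    [NormedSpace ℝ E] {μ : Measure α} {f : α → α} {g : α → E} (hf : Measurable f)
    (hpres : Measure.map f μ = μ) (hg : AEStronglyMeasurable g μ) :
    ∫ u, g (f u) ∂μ = ∫ u, g u ∂μ := by
  rw [← integral_map hf.aemeasurable (by rwa [hpres]), hpres]

theorem setIntegral_Icc_exp_div {β : ℝ} (hβ : β ≠ 0) (a b : ℝ) (hab : a ≤ b) :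
    ∫ u in Set.Icc a b, exp (u / β) = β * (exp (b / β) - exp (a / β)) := by
  rw [integral_Icc_eq_integral_Ioc, ← intervalIntegral.integral_of_le hab,
    intervalIntegral.integral_comp_div exp hβ, integral_exp, smul_eq_mul]

theorem Zf_eq_of_map_eq {f : ℝ → ℝ} (hf : Measurable f) (hpres : Measure.map f U = U)
    {β : ℝ} (hβ : β ≠ 0) : Zf f β = β * (exp (1 / β) - 1) := by
  have hexp := setIntegral_Icc_exp_div hβ 0 1 zero_le_one
  rw [zero_div, exp_zero] at hexp
  rw [Zf, ← hexp]
  exact integral_comp_eq_of_map_eq (g := fun v => exp (v / β)) hf hpres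
    (by fun_prop : Measurable fun v => exp (v / β)).aestronglyMeasurable

theorem Zf_nonneg (f : ℝ → ℝ) (β : ℝ) : 0 ≤ Zf f β :=
  setIntegral_nonneg measurableSet_Icc fun _ _ => (exp_pos _).le

theorem integral_tilted {f : ℝ → ℝ} (hf : Measurable f) (β : ℝ) (g : ℝ → ℝ) :
    ∫ u, g u ∂(tilted f β) = (∫ u in Set.Icc (0:ℝ) 1, g u * exp (f u / β)) / Zf f β := by
  have hdensity : Measurable fun u => ENNReal.ofReal (exp (f u / β) / Zf f β) := by fun_prop
  rw [tilted, integral_withDensity_eq_integral_toReal_smul hdensity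
    (Filter.Eventually.of_forall fun _ => ENNReal.ofReal_lt_top), U, ← integral_div]
  refine integral_congr_ae (Filter.Eventually.of_forall fun u => ?_)
  beta_reduce
  rw [ENNReal.toReal_ofReal (div_nonneg (exp_pos _).le (Zf_nonneg f β)), smul_eq_mul]
  ring

theorem expected_reward_of_uniform_preserving_bijection_general
    (β : ℝ) (hβ : 0 < β) (f finv : ℝ → ℝ) (hf : Measurable f) (hfinv : Measurable finv)
    (hleft : ∀ u ∈ Set.Icc (0:ℝ) 1, finv (f u) = u)
    (hpres : Measure.map f U = U) :
    ∫ u, u ∂(tilted f β)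
      = (∫ u in Set.Icc (0:ℝ) 1, finv u * Real.exp (u / β))
          / (β * (Real.exp (1 / β) - 1)) := by
  have hnumerator : ∫ u in Set.Icc (0:ℝ) 1, finv u * exp (u / β)
      = ∫ u in Set.Icc (0:ℝ) 1, u * exp (f u / β) := by
    change ∫ u, finv u * exp (u / β) ∂U = ∫ u, u * exp (f u / β) ∂U
    rw [← integral_comp_eq_of_map_eq (g := fun v => finv v * exp (v / β)) hf hpres
      (by fun_prop : Measurable fun v => finv v * exp (v / β)).aestronglyMeasurable]
    exact setIntegral_congr_fun measurableSet_Icc fun u hu => by rw [hleft u hu]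
  rw [integral_tilted hf, hnumerator, Zf_eq_of_map_eq hf hpres hβ.ne']

/-- Theorem 1(ii): for a bijective uniform-preserving proxy reward `f` with measurable
inverse `finv`, the expected gold reward (= win rate) of the tilted measure. -/
theorem expected_reward_of_uniform_preserving_bijection
    (β : ℝ) (hβ : 0 < β) (f finv : ℝ → ℝ) (hf : Measurable f) (hfinv : Measurable finv)
    (hmaps : Set.MapsTo f (Set.Icc 0 1) (Set.Icc 0 1))
    (hmaps' : Set.MapsTo finv (Set.Icc 0 1) (Set.Icc 0 1))
    (hleft : ∀ u ∈ Set.Icc (0:ℝ) 1, finv (f u) = u)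
    (hright : ∀ u ∈ Set.Icc (0:ℝ) 1, f (finv u) = u)
    (hpres : Measure.map f U = U) :
    ∫ u, u ∂(tilted f β)
      = (∫ u in Set.Icc (0:ℝ) 1, finv u * Real.exp (u / β))
          / (β * (Real.exp (1 / β) - 1)) :=
  expected_reward_of_uniform_preserving_bijection_general β hβ f finv hf hfinv hleft hpres
end

section
/- Misspecification in the high-reward region caps attainable performance: for 0 < c < 1, the 'top c% wrong' win rate W_top(β) = (∫₀^{1−c} u·e^{u/β} du + ∫_{1−c}^{1} (2 − c − u)·e^{u/β} du) / (β·(e^{1/β} − 1)) tends to 1 − c as β → 0⁺; in particular it stays bounded away from the optimal value 1. -/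
open MeasureTheory Real Filter

/-- Win rate under the 'top c% wrong' proxy reward. -/
noncomputable def Wtop (c β : ℝ) : ℝ :=
  ((∫ u in (0:ℝ)..(1 - c), u * Real.exp (u / β))
      + ∫ u in (1 - c)..(1:ℝ), (2 - c - u) * Real.exp (u / β))
    / (β * (Real.exp (1 / β) - 1))

/-!
Both integrands are affine functions times `exp (u / β)`, so `Wtop c β` has a closed form.
After dividing numerator and denominator by `β * exp (1 / β)` it becomes
`((1 - c + β) - (c + 2β) e^{-c/β} + β e^{-1/β}) / (1 - e^{-1/β})`, and since `e^{-k/β} → 0`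
as `β → 0⁺` for every `k > 0`, this tends to `1 - c`.
-/

open Topology

section ExpIntegrals

variable {β : ℝ}

theorem hasDerivAt_affine_mul_exp_div (hβ : β ≠ 0) (p q u : ℝ) :
    HasDerivAt (fun u => β * (p + q * u - q * β) * exp (u / β))
      ((p + q * u) * exp (u / β)) u := by
  have hexp : HasDerivAt (fun u => exp (u / β)) (exp (u / β) * (1 / β)) u :=
    ((hasDerivAt_id u).div_const β).exp
  have hlin : HasDerivAt (fun u => β * (p + q * u - q * β)) (β * q) u := by
    simpa using (((hasDerivAt_id u).const_mul q).const_add p).sub_const (q * β) |>.const_mul β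
  refine (hlin.mul hexp).congr_deriv ?_
  field_simp
  ring

theorem integral_affine_mul_exp_div (hβ : β ≠ 0) (p q a b : ℝ) :
    ∫ u in a..b, (p + q * u) * exp (u / β) =
      β * (p + q * b - q * β) * exp (b / β) - β * (p + q * a - q * β) * exp (a / β) :=
  intervalIntegral.integral_eq_sub_of_hasDerivAt
    (fun u _ => hasDerivAt_affine_mul_exp_div hβ p q u)
    ((by fun_prop : Continuous fun u => (p + q * u) * exp (u / β)).intervalIntegrable a b)

end ExpIntegrals

theorem Wtop_eq {β : ℝ} (c : ℝ) (hβ : 0 < β) :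
    Wtop c β = ((1 - c + β) - (c + 2 * β) * exp (-c / β) + β * exp (-1 / β))
      / (1 - exp (-1 / β)) := by
  have hE : 1 < exp (1 / β) := one_lt_exp_iff.mpr (by positivity)
  have hlower := integral_affine_mul_exp_div hβ.ne' 0 1 0 (1 - c)
  have hupper := integral_affine_mul_exp_div hβ.ne' (2 - c) (-1) (1 - c) 1
  simp only [zero_add, one_mul, neg_one_mul, ← sub_eq_add_neg] at hlower hupper
  have hsplit : exp ((1 - c) / β) = exp (1 / β) * exp (-c / β) := by
    rw [← exp_add]; ring_nf
  have hinv : exp (-1 / β) = (exp (1 / β))⁻¹ := by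
    rw [← exp_neg, neg_div]
  have hE0 : exp (1 / β) - 1 ≠ 0 := by linarith
  rw [Wtop, hlower, hupper, hsplit, hinv, zero_div, exp_zero]
  field_simp
  ring

theorem tendsto_exp_neg_div_nhdsGT_zero {k : ℝ} (hk : 0 < k) :
    Tendsto (fun β => exp (-k / β)) (𝓝[>] 0) (𝓝 0) := by
  have hdiv : Tendsto (fun β => k * β⁻¹) (𝓝[>] 0) atTop :=
    tendsto_inv_nhdsGT_zero.const_mul_atTop hk
  simpa only [neg_div, div_eq_mul_inv, Function.comp_def, neg_mul] using
    tendsto_exp_neg_atTop_nhds_zero.comp hdiv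

theorem top_wrong_win_rate_limit_general (c : ℝ) (hc : 0 < c) :
    Tendsto (fun β => Wtop c β) (nhdsWithin 0 (Set.Ioi 0)) (nhds (1 - c)) := by
  refine Tendsto.congr' (eventually_nhdsWithin_of_forall fun β hβ => (Wtop_eq c hβ).symm) ?_
  have hid : Tendsto (fun β : ℝ => β) (𝓝[>] 0) (𝓝 0) :=
    tendsto_nhdsWithin_of_tendsto_nhds tendsto_id
  have hexp_c := tendsto_exp_neg_div_nhdsGT_zero hc
  have hexp_one := tendsto_exp_neg_div_nhdsGT_zero one_pos
  simpa [Pi.div_def] using ((tendsto_const_nhds (x := 1 - c)).add hid |>.sub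
      (((tendsto_const_nhds (x := c)).add (hid.const_mul 2)).mul hexp_c) |>.add (hid.mul hexp_one)).div
    ((tendsto_const_nhds (x := 1)).sub hexp_one) (by norm_num)

/-- Misspecification in the high-reward region caps attainable performance:
the 'top c% wrong' win rate tends to `1 − c < 1` as `β → 0⁺`. -/
theorem top_wrong_win_rate_limit (c : ℝ) (hc : 0 < c) (hc1 : c < 1) :
    Tendsto (fun β => Wtop c β) (nhdsWithin 0 (Set.Ioi 0)) (nhds (1 - c)) :=
  top_wrong_win_rate_limit_general c hc
end

section
/- The KL divergence of the RFT-aligned policy, D(β) = ((1/β − 1)·e^{1/β} + 1)/(e^{1/β} − 1) − log β − log(e^{1/β} − 1), tends to +∞ as β → 0⁺. -/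
/-! With `x = 1/β`, the first term of `Dkl β` is `x - 1 + x / (eˣ - 1) ≥ x - 1` and
`log (eˣ - 1) ≤ x`, so `Dkl β ≥ -log β - 1`, which tends to `+∞` as `β → 0⁺`. -/

open Real Filter

/-- KL divergence of the RFT-aligned policy from the reference policy (Theorem 1(i)). -/
noncomputable def Dkl (β : ℝ) : ℝ :=
  ((1 / β - 1) * Real.exp (1 / β) + 1) / (Real.exp (1 / β) - 1)
    - Real.log β - Real.log (Real.exp (1 / β) - 1)

lemma sub_one_le_div_exp_sub_one {x : ℝ} (hx : 0 < x) :
    x - 1 ≤ ((x - 1) * exp x + 1) / (exp x - 1) := by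
  have hden : 0 < exp x - 1 := sub_pos.mpr (one_lt_exp_iff.mpr hx)
  rw [le_div_iff₀ hden]
  linarith

lemma log_exp_sub_one_le {x : ℝ} (hx : 0 < x) : log (exp x - 1) ≤ x := by
  have hden : 0 < exp x - 1 := sub_pos.mpr (one_lt_exp_iff.mpr hx)
  calc log (exp x - 1) ≤ log (exp x) := log_le_log hden (by linarith)
    _ = x := log_exp x

lemma neg_log_sub_one_le_Dkl {β : ℝ} (hβ : 0 < β) : -log β - 1 ≤ Dkl β := by
  have hx : 0 < 1 / β := one_div_pos.mpr hβ
  have hfrac := sub_one_le_div_exp_sub_one hx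
  have hlog := log_exp_sub_one_le hx
  unfold Dkl
  linarith

/-- The KL divergence tends to `+∞` as `β → 0⁺`. -/
theorem kl_tendsto_atTop : Tendsto Dkl (nhdsWithin 0 (Set.Ioi 0)) atTop := by
  have hbound : Tendsto (fun β : ℝ => -log β - 1) (nhdsWithin 0 (Set.Ioi 0)) atTop :=
    tendsto_atTop_add_const_right _ (-1) (tendsto_neg_atTop_iff.mpr tendsto_log_nhdsGT_zero)
  refine tendsto_atTop_mono' _ ?_ hbound
  filter_upwards [self_mem_nhdsWithin] with β hβ
  exact neg_log_sub_one_le_Dkl hβ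
end

section
/- The KL divergence of the RFT-aligned policy, D(β) = ((1/β − 1)·e^{1/β} + 1)/(e^{1/β} − 1) − log β − log(e^{1/β} − 1), tends to 0 as β → ∞. -/
/-!
In the variable `t = 1/β`, `D = exp t / q t - 1 - log (q t)` with `q t = (exp t - 1) / t` the
difference quotient of `exp` at `0`. As `β → ∞`, `t → 0⁺`, so `q t → exp' 0 = 1` and `exp t → 1`,
whence `D → 1 - 1 - log 1 = 0`.
-/

open Real Filter

open scoped Topology

theorem tendsto_exp_sub_one_div_nhdsNE_zero :
    Tendsto (fun t : ℝ => (exp t - 1) / t) (𝓝[≠] 0) (𝓝 1) := by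
  simpa [slope_fun_def_field] using hasDerivAt_iff_tendsto_slope.mp (hasDerivAt_exp 0)

theorem Dkl_inv {t : ℝ} (ht : 0 < t) :
    Dkl t⁻¹ = exp t / ((exp t - 1) / t) - 1 - log ((exp t - 1) / t) := by
  have hexp_sub_one_pos : 0 < exp t - 1 := by linarith [add_one_lt_exp ht.ne']
  rw [Dkl, one_div, inv_inv, log_inv, log_div hexp_sub_one_pos.ne' ht.ne']
  field_simp
  ring

/-- The KL divergence tends to `0` as `β → ∞`. -/
theorem kl_tendsto_zero : Tendsto Dkl atTop (nhds 0) := by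
  have hquot : Tendsto (fun t : ℝ => (exp t - 1) / t) (𝓝[>] 0) (𝓝 1) :=
    tendsto_exp_sub_one_div_nhdsNE_zero.mono_left (nhdsWithin_mono _ fun _ ht => ne_of_gt ht)
  have hexp : Tendsto exp (𝓝[>] 0) (𝓝 1) := by
    simpa using continuous_exp.continuousWithinAt.tendsto (x := 0) (s := Set.Ioi 0)
  have hlim : Tendsto (fun t : ℝ => exp t / ((exp t - 1) / t) - 1 - log ((exp t - 1) / t))
      (𝓝[>] 0) (𝓝 0) := by
    simpa using ((hexp.div hquot one_ne_zero).sub_const 1).sub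
      ((continuousAt_log one_ne_zero).tendsto.comp hquot)
  have hDkl : Tendsto (fun β : ℝ => Dkl β⁻¹⁻¹) atTop (𝓝 0) :=
    (hlim.congr' (eventually_nhdsWithin_of_forall fun _ ht => (Dkl_inv ht).symm)).comp
      tendsto_inv_atTop_nhdsGT_zero
  simpa only [inv_inv] using hDkl
end

section
/- The identity map is the optimal misspecification map: for every β > 0 and every measurable g : [0,1] → [0,1] whose pushforward of U equals U, ∫₀¹ g(u)·e^{u/β} du ≤ ∫₀¹ u·e^{u/β} du. Consequently, among all bijective uniform-preserving proxy rewards f, the win rate (∫₀¹ f⁻¹(u)·e^{u/β} du)/(β(e^{1/β} − 1)) is maximized by f = id. -/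
open MeasureTheory Real

/-! The tangent line of the convex function `x ↦ β e^{x/β}` at `y` gives
`x e^{y/β} ≤ y e^{y/β} + β (e^{x/β} - e^{y/β})`. Put `x = g u`, `y = u` and integrate against a
measure that `g` preserves: the last term integrates to zero. For the win rate, `f⁻¹` preserves
`U` whenever `f` does, and the denominator is positive. -/

lemma mul_exp_div_le {β : ℝ} (hβ : 0 < β) (x y : ℝ) :
    x * exp (y / β) ≤ y * exp (y / β) + β * (exp (x / β) - exp (y / β)) := by
  have hsplit : exp (x / β) = exp ((x - y) / β) * exp (y / β) := by
    rw [← exp_add]; ring_nf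
  have htangent : ((x - y) / β + 1) * exp (y / β) ≤ exp (x / β) := by
    rw [hsplit]; gcongr; exact add_one_le_exp _
  calc x * exp (y / β) = y * exp (y / β) + β * (((x - y) / β + 1) * exp (y / β) - exp (y / β)) := by
        field_simp; ring
    _ ≤ y * exp (y / β) + β * (exp (x / β) - exp (y / β)) := by gcongr

theorem integral_mul_exp_le_of_map_eq {β : ℝ} (hβ : 0 < β) {μ : Measure ℝ}
    {g : ℝ → ℝ} (hg : Measurable g) (hmap : μ.map g = μ)
    (hg_int : Integrable (fun u ↦ g u * exp (u / β)) μ)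
    (hid_int : Integrable (fun u ↦ u * exp (u / β)) μ)
    (hexp_int : Integrable (fun u ↦ exp (u / β)) μ) :
    ∫ u, g u * exp (u / β) ∂μ ≤ ∫ u, u * exp (u / β) ∂μ := by
  have hexp_meas : Measurable fun u : ℝ ↦ exp (u / β) := by fun_prop
  have hexp_g_int : Integrable (fun u ↦ exp (g u / β)) μ := by
    rw [← hmap] at hexp_int
    exact (integrable_map_measure hexp_meas.aestronglyMeasurable hg.aemeasurable).mp hexp_int
  have hexp_g : ∫ u, exp (g u / β) ∂μ = ∫ u, exp (u / β) ∂μ := by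
    conv_rhs => rw [← hmap]
    rw [integral_map hg.aemeasurable hexp_meas.aestronglyMeasurable]
  have hcorr_int : Integrable (fun u ↦ β * (exp (g u / β) - exp (u / β))) μ :=
    (hexp_g_int.sub hexp_int).const_mul β
  calc ∫ u, g u * exp (u / β) ∂μ
      ≤ ∫ u, u * exp (u / β) + β * (exp (g u / β) - exp (u / β)) ∂μ :=
        integral_mono hg_int (hid_int.add hcorr_int) fun u ↦ mul_exp_div_le hβ (g u) u
    _ = ∫ u, u * exp (u / β) ∂μ := by
        rw [integral_add hid_int hcorr_int, integral_const_mul,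
          integral_sub hexp_g_int hexp_int, hexp_g, sub_self, mul_zero, add_zero]

lemma integrable_mul_exp_of_mapsTo (β : ℝ) {h : ℝ → ℝ} (hh : Measurable h)
    (hmaps : Set.MapsTo h (Set.Icc 0 1) (Set.Icc 0 1)) :
    Integrable (fun u ↦ h u * exp (u / β)) U := by
  refine Integrable.bdd_mul (c := 1) ?_ hh.aestronglyMeasurable ?_
  · exact (by fun_prop : Continuous fun u : ℝ ↦ exp (u / β)).integrableOn_Icc
  · filter_upwards [ae_restrict_mem measurableSet_Icc] with u hu
    rw [norm_of_nonneg (hmaps hu).1]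
    exact (hmaps hu).2

lemma map_eq_self_of_ae_leftInverse {α : Type*} [MeasurableSpace α] {μ : Measure α}
    {f finv : α → α} (hf : Measurable f) (hfinv : Measurable finv) (hmap : μ.map f = μ)
    (hinv : ∀ᵐ u ∂μ, finv (f u) = u) : μ.map finv = μ := by
  conv_lhs => rw [← hmap]
  rw [Measure.map_map hfinv hf, Measure.map_congr (g := id) (by exact hinv), Measure.map_id]

/-- The identity map is the optimal misspecification map: every uniform-preserving `g`
satisfies `∫₀¹ g(u)·e^{u/β} du ≤ ∫₀¹ u·e^{u/β} du`; consequently, among bijective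
uniform-preserving proxy rewards, the win rate of Theorem 1(ii) is maximized by `f = id`. -/
theorem identity_is_optimal_misspecification (β : ℝ) (hβ : 0 < β) :
    (∀ g : ℝ → ℝ, Measurable g → Set.MapsTo g (Set.Icc 0 1) (Set.Icc 0 1) →
      Measure.map g U = U →
      (∫ u in Set.Icc (0:ℝ) 1, g u * Real.exp (u / β))
        ≤ ∫ u in Set.Icc (0:ℝ) 1, u * Real.exp (u / β)) ∧
    (∀ f finv : ℝ → ℝ, Measurable f → Measurable finv →
      Set.MapsTo f (Set.Icc 0 1) (Set.Icc 0 1) →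
      Set.MapsTo finv (Set.Icc 0 1) (Set.Icc 0 1) →
      (∀ u ∈ Set.Icc (0:ℝ) 1, finv (f u) = u) →
      (∀ u ∈ Set.Icc (0:ℝ) 1, f (finv u) = u) →
      Measure.map f U = U →
      (∫ u in Set.Icc (0:ℝ) 1, finv u * Real.exp (u / β)) / (β * (Real.exp (1 / β) - 1))
        ≤ (∫ u in Set.Icc (0:ℝ) 1, u * Real.exp (u / β))
            / (β * (Real.exp (1 / β) - 1))) := by
  have hexp_int : Integrable (fun u ↦ exp (u / β)) U :=
    (by fun_prop : Continuous fun u : ℝ ↦ exp (u / β)).integrableOn_Icc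
  have optimal : ∀ g : ℝ → ℝ, Measurable g → Set.MapsTo g (Set.Icc 0 1) (Set.Icc 0 1) →
      U.map g = U → ∫ u, g u * exp (u / β) ∂U ≤ ∫ u, u * exp (u / β) ∂U :=
    fun g hg hmaps hmap ↦ integral_mul_exp_le_of_map_eq hβ hg hmap
      (integrable_mul_exp_of_mapsTo β hg hmaps)
      (integrable_mul_exp_of_mapsTo β measurable_id (Set.mapsTo_id _)) hexp_int
  refine ⟨optimal, fun f finv hf hfinv _ hfinv_maps hleft _ hmap ↦ ?_⟩
  have hfinv_map : U.map finv = U :=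
    map_eq_self_of_ae_leftInverse hf hfinv hmap (ae_restrict_of_forall_mem measurableSet_Icc hleft)
  exact div_le_div_of_nonneg_right (optimal finv hfinv hfinv_maps hfinv_map)
    (mul_nonneg hβ.le (sub_nonneg.mpr (one_le_exp (by positivity))))
end

section
/- The reversal map is the worst misspecification map: for every β > 0 and every measurable g : [0,1] → [0,1] whose pushforward of U equals U, ∫₀¹ g(u)·e^{u/β} du ≥ ∫₀¹ (1 − u)·e^{u/β} du. Consequently, among all bijective uniform-preserving proxy rewards f, the win rate (∫₀¹ f⁻¹(u)·e^{u/β} du)/(β(e^{1/β} − 1)) is minimized by f(u) = 1 − u. -/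
open MeasureTheory Real

/-!
By the layer-cake formula for the weighted measure `ν = w · U` (here `w u = e^{u/β}`),
`∫₀¹ g w = ∫₀^∞ ν {g > t} dt`, so it suffices to compare superlevel sets. As `g` preserves `U`,
`{g > t} ∩ [0,1]` has Lebesgue measure `1 - t`, and by the bathtub principle an increasing weight
gives the least mass to such a set when it is the leftmost interval `[0, 1 - t)`, which is the
superlevel set of `u ↦ 1 - u`. For the win rate, note that `f⁻¹` preserves `U` as well.
-/

open Set
open scoped ENNReal

instance inst_s18 : IsProbabilityMeasure U :=
  ⟨by rw [U, Measure.restrict_apply_univ, Real.volume_Icc, sub_zero, ENNReal.ofReal_one]⟩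

lemma ae_mem_Icc_U : ∀ᵐ u ∂U, u ∈ Icc (0 : ℝ) 1 := ae_restrict_mem measurableSet_Icc

lemma MeasureTheory.MeasurePreserving.ae_comp_mem_Icc_U {g : ℝ → ℝ}
    (hg : MeasurePreserving g U U) : ∀ᵐ u ∂U, g u ∈ Icc (0 : ℝ) 1 :=
  hg.quasiMeasurePreserving.ae ae_mem_Icc_U

lemma MeasureTheory.MeasurePreserving.of_ae_leftInverse {α β : Type*} [MeasurableSpace α]
    [MeasurableSpace β] {μa : Measure α} {μb : Measure β} {f : α → β} {f' : β → α}
    (hf : MeasurePreserving f μa μb) (hf' : Measurable f') (h : ∀ᵐ x ∂μa, f' (f x) = x) :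
    MeasurePreserving f' μb μa :=
  ⟨hf', by
    rw [← hf.map_eq, Measure.map_map hf' hf.measurable]
    exact (Measure.map_congr h).trans Measure.map_id⟩

theorem setLIntegral_Ico_le_of_monotone {μ : Measure ℝ} {w : ℝ → ℝ≥0∞} (hw : Monotone w)
    {A : Set ℝ} (hA : MeasurableSet A) {a b : ℝ} (hAa : A ⊆ Ici a)
    (hμA : μ A = μ (Ico a b)) (hfin : μ (Ico a b) ≠ ∞) :
    ∫⁻ u in Ico a b, w u ∂μ ≤ ∫⁻ u in A, w u ∂μ := by
  have hdiff : μ (Ico a b \ A) = μ (A \ Ico a b) :=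
    measure_sdiff_symm measurableSet_Ico.nullMeasurableSet hA.nullMeasurableSet hμA.symm
      (measure_ne_top_of_subset inter_subset_left hfin)
  have hleft : ∫⁻ u in Ico a b \ A, w u ∂μ ≤ w b * μ (Ico a b \ A) := by
    rw [← setLIntegral_const]
    exact setLIntegral_mono measurable_const fun u hu => hw hu.1.2.le
  have hright : w b * μ (A \ Ico a b) ≤ ∫⁻ u in A \ Ico a b, w u ∂μ := by
    rw [← setLIntegral_const]
    exact setLIntegral_mono hw.measurable fun u hu => hw (not_lt.1 fun h => hu.2 ⟨hAa hu.1, h⟩)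
  calc ∫⁻ u in Ico a b, w u ∂μ
      = ∫⁻ u in Ico a b ∩ A, w u ∂μ + ∫⁻ u in Ico a b \ A, w u ∂μ :=
        (lintegral_inter_add_sdiff _ _ hA).symm
    _ ≤ ∫⁻ u in A ∩ Ico a b, w u ∂μ + ∫⁻ u in A \ Ico a b, w u ∂μ := by
        rw [inter_comm]
        exact add_le_add le_rfl (hleft.trans (hdiff ▸ hright))
    _ = ∫⁻ u in A, w u ∂μ := lintegral_inter_add_sdiff _ _ measurableSet_Ico

theorem lintegral_ofReal_le_of_meas_lt_le {α : Type*} [MeasurableSpace α] {μ : Measure α}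
    {f g : α → ℝ} (hf₀ : 0 ≤ᵐ[μ] f) (hf : AEMeasurable f μ) (hg₀ : 0 ≤ᵐ[μ] g)
    (hg : AEMeasurable g μ) (h : ∀ t > 0, μ {a | t < f a} ≤ μ {a | t < g a}) :
    ∫⁻ a, ENNReal.ofReal (f a) ∂μ ≤ ∫⁻ a, ENNReal.ofReal (g a) ∂μ := by
  rw [lintegral_eq_lintegral_meas_lt μ hf₀ hf, lintegral_eq_lintegral_meas_lt μ hg₀ hg]
  exact setLIntegral_mono' measurableSet_Ioi h

theorem integral_le_integral_of_lintegral_ofReal_le {α : Type*} [MeasurableSpace α]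
    {μ : Measure α} {f g : α → ℝ} (hf₀ : 0 ≤ᵐ[μ] f) (hf : AEStronglyMeasurable f μ)
    (hg₀ : 0 ≤ᵐ[μ] g) (hg : Integrable g μ)
    (h : ∫⁻ a, ENNReal.ofReal (f a) ∂μ ≤ ∫⁻ a, ENNReal.ofReal (g a) ∂μ) :
    ∫ a, f a ∂μ ≤ ∫ a, g a ∂μ := by
  rw [integral_eq_lintegral_of_nonneg_ae hf₀ hf,
    integral_eq_lintegral_of_nonneg_ae hg₀ hg.aestronglyMeasurable]
  exact ENNReal.toReal_mono hg.lintegral_lt_top.ne h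

section Reversal

variable {g : ℝ → ℝ} {w : ℝ → ℝ≥0∞}

theorem withDensity_setOf_lt_one_sub_le (hg : MeasurePreserving g U U) (hw : Monotone w)
    {t : ℝ} (ht : 0 < t) :
    U.withDensity w {u | t < 1 - u} ≤ U.withDensity w {u | t < g u} := by
  have hlevel : MeasurableSet {u | t < g u} := measurableSet_lt measurable_const hg.measurable
  have hreversal : {u : ℝ | t < 1 - u} ∩ Icc 0 1 = Ico 0 (1 - t) := by
    ext u
    simp only [mem_inter_iff, mem_ofPred_eq, mem_Icc, mem_Ico]
    constructor
    · rintro ⟨hu, hu₀, -⟩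
      exact ⟨hu₀, by linarith⟩
    · rintro ⟨hu₀, hu⟩
      exact ⟨by linarith, hu₀, by linarith⟩
  rw [withDensity_apply _ (measurableSet_lt measurable_const (by fun_prop)),
    withDensity_apply _ hlevel, U, Measure.restrict_restrict (by measurability),
    Measure.restrict_restrict hlevel, hreversal]
  refine setLIntegral_Ico_le_of_monotone hw (hlevel.inter measurableSet_Icc)
    (inter_subset_right.trans Icc_subset_Ici_self) ?_ measure_Ico_lt_top.ne
  have hpreserved : Ioi t ∩ Icc 0 1 = Ioc t 1 := by
    ext u
    simp only [mem_inter_iff, mem_Ioi, mem_Icc, mem_Ioc]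
    constructor
    · rintro ⟨hu, -, hu₁⟩
      exact ⟨hu, hu₁⟩
    · rintro ⟨hu, hu₁⟩
      exact ⟨hu, by linarith, hu₁⟩
  calc volume ({u | t < g u} ∩ Icc 0 1)
      = U (g ⁻¹' Ioi t) := (Measure.restrict_apply hlevel).symm
    _ = U (Ioi t) := hg.measure_preimage measurableSet_Ioi.nullMeasurableSet
    _ = volume (Ico 0 (1 - t)) := by
      rw [U, Measure.restrict_apply measurableSet_Ioi, hpreserved, Real.volume_Ioc,
        Real.volume_Ico, sub_zero]

theorem lintegral_one_sub_mul_le (hg : MeasurePreserving g U U) (hw : Monotone w) :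
    ∫⁻ u, ENNReal.ofReal (1 - u) * w u ∂U ≤ ∫⁻ u, ENNReal.ofReal (g u) * w u ∂U := by
  have hdensity {h : ℝ → ℝ} (hh : Measurable h) :
      ∫⁻ u, ENNReal.ofReal (h u) * w u ∂U = ∫⁻ u, ENNReal.ofReal (h u) ∂U.withDensity w := by
    rw [lintegral_withDensity_eq_lintegral_mul _ hw.measurable hh.ennreal_ofReal]
    simp only [Pi.mul_apply, mul_comm]
  have hac := withDensity_absolutelyContinuous U w
  rw [hdensity (by fun_prop), hdensity hg.measurable]
  refine lintegral_ofReal_le_of_meas_lt_le ?_ (by fun_prop) ?_ hg.measurable.aemeasurable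
    fun t ht => withDensity_setOf_lt_one_sub_le hg hw ht
  · filter_upwards [hac.ae_le ae_mem_Icc_U] with u hu using sub_nonneg.2 hu.2
  · filter_upwards [hac.ae_le hg.ae_comp_mem_Icc_U] with u hu using hu.1

theorem setIntegral_one_sub_mul_le (hg : MeasurePreserving g U U) {w : ℝ → ℝ}
    (hw : Monotone w) (hw₀ : 0 ≤ w) :
    ∫ u in Icc (0 : ℝ) 1, (1 - u) * w u ≤ ∫ u in Icc (0 : ℝ) 1, g u * w u := by
  have hwm := hw.measurable
  have hbound : ∀ᵐ u ∂U, ‖g u * w u‖ ≤ w 1 := by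
    filter_upwards [ae_mem_Icc_U, hg.ae_comp_mem_Icc_U] with u hu hgu
    rw [norm_mul, norm_of_nonneg hgu.1, norm_of_nonneg (hw₀ u)]
    exact (mul_le_of_le_one_left (hw₀ u) hgu.2).trans (hw hu.2)
  refine integral_le_integral_of_lintegral_ofReal_le (μ := U) ?_
    (by fun_prop : Measurable _).aestronglyMeasurable ?_
    (.of_bound (hg.measurable.mul hwm).aestronglyMeasurable _ hbound) ?_
  · filter_upwards [ae_mem_Icc_U] with u hu using mul_nonneg (sub_nonneg.2 hu.2) (hw₀ u)
  · filter_upwards [hg.ae_comp_mem_Icc_U] with u hu using mul_nonneg hu.1 (hw₀ u)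
  · simp only [ENNReal.ofReal_mul' (hw₀ _)]
    exact lintegral_one_sub_mul_le hg fun a b h => ENNReal.ofReal_le_ofReal (hw h)

end Reversal

/-- The reversal map is the worst misspecification map: every uniform-preserving `g`
satisfies `∫₀¹ g(u)·e^{u/β} du ≥ ∫₀¹ (1−u)·e^{u/β} du`; consequently, among bijective
uniform-preserving proxy rewards, the win rate of Theorem 1(ii) is minimized by
`f(u) = 1 − u`. -/
theorem reversal_is_worst_misspecification (β : ℝ) (hβ : 0 < β) :
    (∀ g : ℝ → ℝ, Measurable g → Set.MapsTo g (Set.Icc 0 1) (Set.Icc 0 1) →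
      Measure.map g U = U →
      (∫ u in Set.Icc (0:ℝ) 1, (1 - u) * Real.exp (u / β))
        ≤ ∫ u in Set.Icc (0:ℝ) 1, g u * Real.exp (u / β)) ∧
    (∀ f finv : ℝ → ℝ, Measurable f → Measurable finv →
      Set.MapsTo f (Set.Icc 0 1) (Set.Icc 0 1) →
      Set.MapsTo finv (Set.Icc 0 1) (Set.Icc 0 1) →
      (∀ u ∈ Set.Icc (0:ℝ) 1, finv (f u) = u) →
      (∀ u ∈ Set.Icc (0:ℝ) 1, f (finv u) = u) →
      Measure.map f U = U →
      (∫ u in Set.Icc (0:ℝ) 1, (1 - u) * Real.exp (u / β))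
          / (β * (Real.exp (1 / β) - 1))
        ≤ (∫ u in Set.Icc (0:ℝ) 1, finv u * Real.exp (u / β))
            / (β * (Real.exp (1 / β) - 1))) := by
  have hexp : Monotone fun u => exp (u / β) := fun a b h =>
    exp_le_exp.2 (div_le_div_of_nonneg_right h hβ.le)
  have hworst {g : ℝ → ℝ} (hg : MeasurePreserving g U U) :
      ∫ u in Icc (0 : ℝ) 1, (1 - u) * exp (u / β) ≤ ∫ u in Icc (0 : ℝ) 1, g u * exp (u / β) :=
    setIntegral_one_sub_mul_le hg hexp fun u => (exp_pos _).le
  refine ⟨fun g hg _ hmap => hworst ⟨hg, hmap⟩, ?_⟩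
  intro f finv hf hfinv _ _ hleft _ hmap
  have hfinv_preserving : MeasurePreserving finv U U :=
    MeasurePreserving.of_ae_leftInverse ⟨hf, hmap⟩ hfinv
      (by filter_upwards [ae_mem_Icc_U] with u hu using hleft u hu)
  exact div_le_div_of_nonneg_right (hworst hfinv_preserving)
    (mul_nonneg hβ.le (sub_nonneg.2 (one_le_exp (by positivity))))
end
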